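/- arXiv:math/0607673 — 2 statements merged into one kernel-verified Lean document; each statement's English description precedes it below -/
import Mathlib

section
/- Fix 0 ≤ k with 2k ≤ n and let σ_o(k) := (1, n−k+1)(2, n−k+2)⋯(k, n), an involution of {1,…,n} with k two-cycles. Then (R_{σ_o(k)})_{i,j} = max(0, j − i + 1 − (n − k)) for all i, j, and for every involution σ of {1,…,n} with exactly k two-cycles one has R_{σ_o(k)} ⪯ R_σ; thus σ_o(k) is the unique minimal element, with respect to ⪯ of rank matrices, among involutions with exactly k two-cycles. -/
open Matrix

/-- A matrix is strictly upper-triangular. -/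
def StrictUpper {n : ℕ} (x : Matrix (Fin n) (Fin n) ℂ) : Prop :=
  ∀ a b : Fin n, b ≤ a → x a b = 0

/-- A matrix is (weakly) upper-triangular. -/
def UpperTri {n : ℕ} (x : Matrix (Fin n) (Fin n) ℂ) : Prop :=
  ∀ a b : Fin n, b < a → x a b = 0

/-- The orbit of a matrix under conjugation by invertible upper-triangular matrices. -/
def Borbit {n : ℕ} (x : Matrix (Fin n) (Fin n) ℂ) : Set (Matrix (Fin n) (Fin n) ℂ) :=
  {y | ∃ b : Matrix (Fin n) (Fin n) ℂ, IsUnit b ∧ UpperTri b ∧ y = b * x * b⁻¹}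

/-- A permutation is an involution. -/
def IsInvol {n : ℕ} (σ : Equiv.Perm (Fin n)) : Prop := σ * σ = 1

/-- The strictly upper-triangular part `N_σ` of the permutation matrix of `σ`. -/
def Nmat {n : ℕ} (σ : Equiv.Perm (Fin n)) : Matrix (Fin n) (Fin n) ℂ :=
  Matrix.of fun a b => if a < b ∧ σ a = b then (1 : ℂ) else 0

/-- The submatrix `π_{i,j}(x)` on rows and columns `i,…,j` (1-based), for `1 ≤ i ≤ j ≤ n`. -/
def blk {n : ℕ} (x : Matrix (Fin n) (Fin n) ℂ) (i j : ℕ)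
    (h1 : 1 ≤ i) (h2 : i ≤ j) (h3 : j ≤ n) :
    Matrix (Fin (j + 1 - i)) (Fin (j + 1 - i)) ℂ :=
  Matrix.of fun a b =>
    x ⟨i - 1 + a.1, by have := a.2; omega⟩ ⟨i - 1 + b.1, by have := b.2; omega⟩

/-- The rank matrix of `N_σ` (1-based indices, 0 outside the range `1 ≤ i < j ≤ n`). -/
noncomputable def Rfun {n : ℕ} (σ : Equiv.Perm (Fin n)) : ℕ → ℕ → ℕ := fun i j =>
  if h : 1 ≤ i ∧ i < j ∧ j ≤ n then (blk (Nmat σ) i j h.1 h.2.1.le h.2.2).rank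
  else 0

/-- The number of two-cycles of an involution. -/
def numCycles {n : ℕ} (σ : Equiv.Perm (Fin n)) : ℕ :=
  (Finset.univ.filter fun a : Fin n => a < σ a).card

/-- Evaluation of a polynomial in the matrix entries at a matrix. -/
noncomputable def evalMat {n : ℕ} (x : Matrix (Fin n) (Fin n) ℂ)
    (f : MvPolynomial (Fin n × Fin n) ℂ) : ℂ :=
  MvPolynomial.eval (fun p => x p.1 p.2) f

/-- The vanishing ideal of a set of matrices. -/
noncomputable def vanishingIdeal {n : ℕ} (S : Set (Matrix (Fin n) (Fin n) ℂ)) :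
    Ideal (MvPolynomial (Fin n × Fin n) ℂ) where
  carrier := {f | ∀ x ∈ S, evalMat x f = 0}
  add_mem' := by
    intro a b ha hb x hx
    simp only [evalMat, map_add] at *
    rw [ha x hx, hb x hx, add_zero]
  zero_mem' := by
    intro x hx
    simp [evalMat]
  smul_mem' := by
    intro c f hf x hx
    simp only [evalMat, smul_eq_mul, _root_.map_mul] at *
    rw [hf x hx, mul_zero]

/-- The Zariski closure of a set of matrices: the common zero set of its vanishing ideal. -/
noncomputable def zclosure {n : ℕ} (S : Set (Matrix (Fin n) (Fin n) ℂ)) :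
    Set (Matrix (Fin n) (Fin n) ℂ) :=
  {x | ∀ f ∈ vanishingIdeal S, evalMat x f = 0}

/-- The space of upper-triangular matrices commuting with a given matrix
(the Lie algebra of the stabilizer of `N` in `B`). -/
noncomputable def commUT {n : ℕ} (N : Matrix (Fin n) (Fin n) ℂ) :
    Submodule ℂ (Matrix (Fin n) (Fin n) ℂ) where
  carrier := {z | UpperTri z ∧ z * N = N * z}
  add_mem' := by
    rintro a b ⟨ha1, ha2⟩ ⟨hb1, hb2⟩
    refine ⟨fun p q h => ?_, by rw [add_mul, mul_add, ha2, hb2]⟩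
    simp [Matrix.add_apply, ha1 p q h, hb1 p q h]
  zero_mem' := ⟨fun p q h => rfl, by simp⟩
  smul_mem' := by
    rintro c a ⟨ha1, ha2⟩
    refine ⟨fun p q h => ?_, by rw [Matrix.smul_mul, Matrix.mul_smul, ha2]⟩
    simp [Matrix.smul_apply, ha1 p q h]

/-!
A window `[i, j]` of `N_σ` is a partial permutation matrix, so its rank counts the two-cycles of
`σ` with both ends in the window. Sending each of the other two-cycles to an end outside the
window shows that at most `n - (j - i + 1)` of the `k` two-cycles leave it, which is the lower
bound `j - i + 1 - (n - k)`; `σ_o(k)` attains it in every window. Conversely, removing the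
left end `i` of the window changes the count exactly when `i` is paired with a point of the
window, so the rank matrix determines an involution; a minimal `τ` has the rank matrix of
`σ_o(k)` and hence equals it.
-/

open Finset

theorem Fin.card_filter_univ_val {n : ℕ} (p : ℕ → Prop) [DecidablePred p] :
    #{x : Fin n | p x} = #{a ∈ Iio n | p a} := by
  rw [← Fin.map_valEmbedding_univ, filter_map, card_map]
  rfl

theorem Matrix.rank_of_partialMatching {m n K : Type*} [Fintype m] [Fintype n] [Field K]
    (p : m → n → Prop) [∀ a b, Decidable (p a b)] [DecidablePred fun a => ∃ b, p a b]
    (hrow : ∀ a b b', p a b → p a b' → b = b') (hcol : ∀ a a' b, p a b → p a' b → a = a') :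
    (Matrix.of fun a b => if p a b then (1 : K) else 0).rank = #{a | ∃ b, p a b} := by
  classical
  set M : Matrix m n K := Matrix.of fun a b => if p a b then (1 : K) else 0
  set S : Finset m := {a | ∃ b, p a b}
  choose g hg using fun a : S => (mem_filter.1 a.2).2
  have hrowS : ∀ a : S, M.row a = Pi.basisFun K n (g a) := fun a => by
    ext b
    simp only [M, Matrix.row, Matrix.of_apply, Pi.basisFun_apply, Pi.single_apply]
    exact if_congr ⟨fun h => hrow a _ _ h (hg a), fun h => h ▸ hg a⟩ rfl rfl
  have hzero : ∀ a ∉ S, M.row a = 0 := fun a ha => by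
    ext b
    simp only [S, mem_filter, mem_univ, true_and, not_exists] at ha
    simp [M, Matrix.row, ha b]
  have hspan : Submodule.span K (Set.range M.row) =
      Submodule.span K (Set.range fun a : S => Pi.basisFun K n (g a)) := by
    apply le_antisymm <;> rw [Submodule.span_le]
    · rintro _ ⟨a, rfl⟩
      by_cases ha : a ∈ S
      · exact Submodule.subset_span ⟨⟨a, ha⟩, (hrowS ⟨a, ha⟩).symm⟩
      · simp [hzero a ha]
    · rintro _ ⟨a, rfl⟩
      exact Submodule.subset_span ⟨a, hrowS a⟩
  have hli : LinearIndependent K fun a : S => Pi.basisFun K n (g a) :=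
    (Pi.basisFun K n).linearIndependent.comp g fun a a' h =>
      Subtype.ext (hcol a a' _ (hg a) (h ▸ hg a'))
  rw [Matrix.rank_eq_finrank_span_row, hspan, finrank_span_eq_card hli, Fintype.card_coe]

section Arcs

variable {n : ℕ}

def arcs (σ : Equiv.Perm (Fin n)) : Finset (Fin n) := {x | x < σ x}

/-- The arcs `x < σ x` of `σ` inside the window `[l, r]`; unlike `Rfun`, windows are 0-based. -/
def arcsIn (σ : Equiv.Perm (Fin n)) (l r : ℕ) : Finset (Fin n) :=
  {x ∈ arcs σ | l ≤ (x : ℕ) ∧ ((σ x : Fin n) : ℕ) ≤ r}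

theorem numCycles_eq_card_arcs (σ : Equiv.Perm (Fin n)) : numCycles σ = #(arcs σ) := rfl

theorem Rfun_eq_card_arcsIn (σ : Equiv.Perm (Fin n)) {i j : ℕ} (hi : 1 ≤ i) (hij : i < j)
    (hj : j ≤ n) : Rfun σ i j = #(arcsIn σ (i - 1) (j - 1)) := by
  rw [Rfun, dif_pos ⟨hi, hij, hj⟩]
  let emb (a : Fin (j + 1 - i)) : Fin n := ⟨i - 1 + a, by omega⟩
  have hblk : blk (Nmat σ) i j hi hij.le hj =
      Matrix.of fun a b => if emb a < emb b ∧ σ (emb a) = emb b then (1 : ℂ) else 0 := rfl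
  have hemb (a : Fin (j + 1 - i)) : (emb a : ℕ) = i - 1 + a := rfl
  have hinj : Function.Injective emb := fun a a' h =>
    Fin.ext (Nat.add_left_cancel (congrArg Fin.val h))
  clear_value emb
  rw [hblk, Matrix.rank_of_partialMatching _ (fun _ _ _ hb hb' => hinj (hb.2.symm.trans hb'.2))
    (fun _ _ _ ha ha' => hinj (σ.injective (ha.2.trans ha'.2.symm)))]
  refine card_bij (fun a _ => emb a) (fun a ha => ?_) (fun a _ a' _ h => hinj h) (fun x hx => ?_)
  · obtain ⟨b, hab, hb⟩ := (mem_filter.1 ha).2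
    simp only [arcsIn, arcs, mem_filter, mem_univ, true_and, hb]
    refine ⟨hab, ?_, ?_⟩ <;> simp only [hemb] <;> omega
  · simp only [arcsIn, arcs, mem_filter, mem_univ, true_and, Fin.lt_def] at hx
    obtain ⟨a, rfl⟩ : ∃ a, emb a = x :=
      ⟨⟨x - (i - 1), by omega⟩, Fin.ext (by rw [hemb, Fin.val_mk]; omega)⟩
    refine ⟨a, mem_filter.2 ⟨mem_univ _, ⟨σ (emb a) - (i - 1), by omega⟩, ?_⟩, rfl⟩
    simp only [Fin.lt_def, Fin.ext_iff, hemb] at hx ⊢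
    omega

theorem arcsIn_eq_empty (σ : Equiv.Perm (Fin n)) {l r : ℕ} (h : r ≤ l) : arcsIn σ l r = ∅ := by
  ext x
  simp only [arcsIn, arcs, mem_filter, mem_univ, true_and, Fin.lt_def, notMem_empty, iff_false]
  omega

theorem card_arcsIn_eq_card_arcsIn_succ_add (σ : Equiv.Perm (Fin n)) (x : Fin n) (r : ℕ) :
    #(arcsIn σ x r) =
      #(arcsIn σ (x + 1) r) + if x < σ x ∧ ((σ x : Fin n) : ℕ) ≤ r then 1 else 0 := by
  have hsucc : ∀ y ≠ x, y ∈ arcsIn σ x r ↔ y ∈ arcsIn σ (x + 1) r := fun y hyx => by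
    have := Fin.val_ne_of_ne hyx
    simp only [arcsIn, arcs, mem_filter, mem_univ, true_and, Fin.lt_def]
    omega
  have hx : x ∉ arcsIn σ (x + 1) r := fun h => by simp only [arcsIn, mem_filter] at h; omega
  split_ifs with hσx
  · rw [← card_insert_of_notMem hx]
    congr 1
    ext y
    rcases eq_or_ne y x with rfl | hyx
    · simpa [arcsIn, arcs] using hσx
    · rw [hsucc y hyx, mem_insert, or_iff_right hyx]
  · rw [add_zero]
    congr 1
    ext y
    rcases eq_or_ne y x with rfl | hyx
    · simpa [arcsIn, arcs, hx] using hσx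
    · exact hsucc y hyx

theorem Fin.card_filter_val_lt_or_lt (l r : ℕ) (hr : r < n) :
    #{x : Fin n | (x : ℕ) < l ∨ r < x} = n - (r + 1 - l) := by
  have hcompl : {a ∈ Iio n | a < l ∨ r < a} = Iio n \ Icc l r := by
    ext a
    simp only [mem_filter, mem_Iio, mem_sdiff, mem_Icc]
    omega
  rw [Fin.card_filter_univ_val (fun a => a < l ∨ r < a), hcompl, card_sdiff_of_subset,
    Nat.card_Iio, Nat.card_Icc]
  intro a
  simp only [mem_Icc, mem_Iio]
  omega

theorem card_arcs_le_card_arcsIn_add (σ : Equiv.Perm (Fin n)) (l r : ℕ) :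
    #(arcs σ) ≤ #(arcsIn σ l r) + #{x : Fin n | (x : ℕ) < l ∨ r < x} := by
  rw [← card_filter_add_card_filter_not (s := arcs σ)
    fun x => l ≤ (x : ℕ) ∧ ((σ x : Fin n) : ℕ) ≤ r]
  -- send an arc leaving the window to an end of it outside the window
  refine Nat.add_le_add_left
    (card_le_card_of_injOn (fun x : Fin n => if (x : ℕ) < l then x else σ x) ?_ ?_) _
  · intro x hx
    simp only [arcs, coe_filter, mem_filter, mem_univ, true_and, Set.mem_ofPred_eq,
      Fin.lt_def] at hx ⊢
    split_ifs <;> omega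
  · intro x hx y hy hxy
    simp only [arcs, coe_filter, mem_filter, mem_univ, true_and, Set.mem_ofPred_eq,
      Fin.lt_def] at hx hy
    dsimp only at hxy
    split_ifs at hxy with h1 h2 h2
    · exact hxy
    · have := congrArg Fin.val hxy; omega
    · have := congrArg Fin.val hxy; omega
    · exact σ.injective hxy

theorem numCycles_add_le_card_arcsIn_add (σ : Equiv.Perm (Fin n)) (l r : ℕ) (hr : r < n) :
    numCycles σ + (r + 1 - l) ≤ #(arcsIn σ l r) + n := by
  have := card_arcs_le_card_arcsIn_add σ l r
  rw [Fin.card_filter_val_lt_or_lt l r hr] at this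
  rw [numCycles_eq_card_arcs]
  omega

theorem IsInvol.apply_apply {σ : Equiv.Perm (Fin n)} (hσ : IsInvol σ) (x : Fin n) :
    σ (σ x) = x :=
  DFunLike.congr_fun hσ x

theorem card_arcsIn_eq_of_Rfun_eq {σ τ : Equiv.Perm (Fin n)} (h : Rfun σ = Rfun τ) (l : ℕ)
    {r : ℕ} (hr : r < n) : #(arcsIn σ l r) = #(arcsIn τ l r) := by
  rcases lt_or_ge l r with hlr | hrl
  · have hR := congrFun₂ h (l + 1) (r + 1)
    rwa [Rfun_eq_card_arcsIn σ (by omega) (by omega) (by omega),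
      Rfun_eq_card_arcsIn τ (by omega) (by omega) (by omega), Nat.add_sub_cancel,
      Nat.add_sub_cancel] at hR
  · rw [arcsIn_eq_empty σ hrl, arcsIn_eq_empty τ hrl]

theorem apply_eq_of_Rfun_eq_of_lt {σ τ : Equiv.Perm (Fin n)} (h : Rfun σ = Rfun τ) {x : Fin n}
    (hx : x < σ x) : τ x = σ x := by
  have hends : ∀ r < n,
      (x < σ x ∧ ((σ x : Fin n) : ℕ) ≤ r) ↔ (x < τ x ∧ ((τ x : Fin n) : ℕ) ≤ r) := by
    intro r hr
    have hσr := card_arcsIn_eq_card_arcsIn_succ_add σ x r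
    have hτr := card_arcsIn_eq_card_arcsIn_succ_add τ x r
    rw [card_arcsIn_eq_of_Rfun_eq h _ hr, card_arcsIn_eq_of_Rfun_eq h _ hr] at hσr
    split_ifs at hσr hτr <;> omega
  obtain ⟨hτx, hle⟩ := (hends _ (σ x).2).1 ⟨hx, le_rfl⟩
  exact Fin.ext (le_antisymm hle ((hends _ (τ x).2).2 ⟨hτx, le_rfl⟩).2)

theorem apply_eq_of_Rfun_eq {σ τ : Equiv.Perm (Fin n)} (h : Rfun σ = Rfun τ) (hσ : IsInvol σ)
    (hτ : IsInvol τ) {x : Fin n} (hx : σ x ≠ x) : τ x = σ x := by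
  rcases hx.lt_or_gt with hlt | hgt
  · have hσx := apply_eq_of_Rfun_eq_of_lt h (x := σ x) (by rwa [hσ.apply_apply])
    rw [hσ.apply_apply] at hσx
    rw [← hτ.apply_apply (σ x), hσx]
  · exact apply_eq_of_Rfun_eq_of_lt h hgt

theorem eq_of_Rfun_eq {σ τ : Equiv.Perm (Fin n)} (hσ : IsInvol σ) (hτ : IsInvol τ)
    (h : Rfun σ = Rfun τ) : σ = τ := by
  ext1 x
  by_cases hσx : σ x = x
  · by_cases hτx : τ x = x
    · rw [hσx, hτx]
    · exact apply_eq_of_Rfun_eq h.symm hτ hσ hτx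
  · exact (apply_eq_of_Rfun_eq h hσ hτ hσx).symm

end Arcs

/-- `σ` is the involution `σ_o(k) = (1, n-k+1)(2, n-k+2)⋯(k, n)`, in 0-based indices. -/
def IsSigmaO {n : ℕ} (k : ℕ) (σ : Equiv.Perm (Fin n)) : Prop :=
  ∀ a : Fin n, ((σ a : Fin n) : ℕ) =
    if (a : ℕ) < k then (a : ℕ) + (n - k)
    else if n - k ≤ (a : ℕ) then (a : ℕ) - (n - k) else (a : ℕ)

namespace IsSigmaO

variable {n k : ℕ} {σ : Equiv.Perm (Fin n)}

theorem isInvol (hσ : IsSigmaO k σ) (hk : 2 * k ≤ n) : IsInvol σ := by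
  ext x
  have hx := hσ x
  have hσx := hσ (σ x)
  show ((σ (σ x) : Fin n) : ℕ) = x
  split_ifs at hx hσx <;> omega

theorem arcs_eq (hσ : IsSigmaO k σ) (hk : 2 * k ≤ n) :
    arcs σ = ({x : Fin n | (x : ℕ) < k} : Finset (Fin n)) := by
  ext x
  have hx := hσ x
  simp only [arcs, mem_filter, mem_univ, true_and, Fin.lt_def]
  split_ifs at hx <;> omega

theorem numCycles_eq (hσ : IsSigmaO k σ) (hk : 2 * k ≤ n) : numCycles σ = k := by
  rw [numCycles_eq_card_arcs, hσ.arcs_eq hk, Fin.card_filter_val_lt]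
  omega

theorem card_arcsIn (hσ : IsSigmaO k σ) (hk : 2 * k ≤ n) (l : ℕ) {r : ℕ} (hr : r < n) :
    #(arcsIn σ l r) = r + 1 - l - (n - k) := by
  have hwin : arcsIn σ l r =
      ({x : Fin n | l ≤ (x : ℕ) ∧ (x : ℕ) < k ∧ (x : ℕ) + (n - k) ≤ r} : Finset (Fin n)) := by
    ext x
    have hx := hσ x
    simp only [arcsIn, hσ.arcs_eq hk, mem_filter, mem_univ, true_and]
    split_ifs at hx <;> omega
  have hIco : {a ∈ Iio n | l ≤ a ∧ a < k ∧ a + (n - k) ≤ r} = Ico l (r + 1 - (n - k)) := by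
    ext a
    simp only [mem_filter, mem_Iio, mem_Ico]
    omega
  rw [hwin, Fin.card_filter_univ_val (fun a => l ≤ a ∧ a < k ∧ a + (n - k) ≤ r), hIco,
    Nat.card_Ico]
  omega

theorem Rfun_eq (hσ : IsSigmaO k σ) (hk : 2 * k ≤ n) :
    ∀ i j, 1 ≤ i → i ≤ n → 1 ≤ j → j ≤ n → Rfun σ i j = j + 1 - i - (n - k) := by
  intro i j hi hin _ hjn
  by_cases hij : i < j
  · rw [Rfun_eq_card_arcsIn σ hi hij hjn, hσ.card_arcsIn hk _ (by omega)]
    omega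
  · rw [Rfun, dif_neg (by omega)]
    omega

theorem Rfun_le (hσ : IsSigmaO k σ) (hk : 2 * k ≤ n) {τ : Equiv.Perm (Fin n)}
    (hτ : numCycles τ = k) (i j : ℕ) : Rfun σ i j ≤ Rfun τ i j := by
  by_cases hij : 1 ≤ i ∧ i < j ∧ j ≤ n
  · obtain ⟨hi, hij, hjn⟩ := hij
    have hbound := numCycles_add_le_card_arcsIn_add τ (i - 1) (j - 1) (by omega)
    rw [Rfun_eq_card_arcsIn σ hi hij hjn, Rfun_eq_card_arcsIn τ hi hij hjn,
      hσ.card_arcsIn hk _ (by omega)]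
    omega
  · simp [Rfun, dif_neg hij]

end IsSigmaO

theorem stmt10_general (n k : ℕ) (hk : 2 * k ≤ n)
    (σo : Equiv.Perm (Fin n))
    (hσo : ∀ a : Fin n, ((σo a : Fin n) : ℕ) =
      if (a : ℕ) < k then (a : ℕ) + (n - k)
      else if n - k ≤ (a : ℕ) then (a : ℕ) - (n - k) else (a : ℕ)) :
    IsInvol σo ∧ numCycles σo = k ∧
    (∀ i j, 1 ≤ i → i ≤ n → 1 ≤ j → j ≤ n → Rfun σo i j = j + 1 - i - (n - k)) ∧
    (∀ σ : Equiv.Perm (Fin n), IsInvol σ → numCycles σ = k →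
      ∀ i j, Rfun σo i j ≤ Rfun σ i j) ∧
    (∀ τ : Equiv.Perm (Fin n), IsInvol τ → numCycles τ = k →
      (∀ σ : Equiv.Perm (Fin n), IsInvol σ → numCycles σ = k →
        ∀ i j, Rfun τ i j ≤ Rfun σ i j) → τ = σo) := by
  have hσo : IsSigmaO k σo := hσo
  have hinv := hσo.isInvol hk
  have hcyc := hσo.numCycles_eq hk
  refine ⟨hinv, hcyc, hσo.Rfun_eq hk, fun σ _ hσ => hσo.Rfun_le hk hσ,
    fun τ hτ hτk hmin => eq_of_Rfun_eq hτ hinv (funext₂ fun i j => le_antisymm ?_ ?_)⟩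
  · exact hmin σo hinv hcyc i j
  · exact hσo.Rfun_le hk hτk i j

/-- `σ_o(k) = (1,n−k+1)(2,n−k+2)⋯(k,n)` is the unique minimal involution
with `k` two-cycles, and its rank matrix is `max(0, j−i+1−(n−k))`. -/
theorem stmt10 (n k : ℕ) (hn : 1 ≤ n) (hk : 2 * k ≤ n)
    (σo : Equiv.Perm (Fin n))
    (hσo : ∀ a : Fin n, ((σo a : Fin n) : ℕ) =
      if (a : ℕ) < k then (a : ℕ) + (n - k)
      else if n - k ≤ (a : ℕ) then (a : ℕ) - (n - k) else (a : ℕ)) :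
    IsInvol σo ∧ numCycles σo = k ∧
    (∀ i j, 1 ≤ i → i ≤ n → 1 ≤ j → j ≤ n → Rfun σo i j = j + 1 - i - (n - k)) ∧
    (∀ σ : Equiv.Perm (Fin n), IsInvol σ → numCycles σ = k →
      ∀ i j, Rfun σo i j ≤ Rfun σ i j) ∧
    (∀ τ : Equiv.Perm (Fin n), IsInvol τ → numCycles τ = k →
      (∀ σ : Equiv.Perm (Fin n), IsInvol σ → numCycles σ = k →
        ∀ i j, Rfun τ i j ≤ Rfun σ i j) → τ = σo) :=
  stmt10_general n k hk σo hσo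
end

section
/- Let σ be an involution of {1,…,n} and 1 ≤ i < j ≤ n. If (R_σ)_{i,j} = (R_σ)_{i,j−1} + 1 (two horizontally consecutive entries differ by one), then (R_σ)_{i',j} = (R_σ)_{i',j−1} + 1 for every 1 ≤ i' ≤ i. Similarly, if (R_σ)_{i,j} = (R_σ)_{i+1,j} + 1 (two vertically consecutive entries differ by one), then (R_σ)_{i,j'} = (R_σ)_{i+1,j'} + 1 for every j ≤ j' ≤ n. -/
open Matrix

/-!
For every permutation `σ`, each block `π_{i,j}(N_σ)` has at most one nonzero entry per column,
so its rank counts the arcs `a < σ a` with both ends in the window `i, …, j`. Widening the window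
from `j - 1` to `j` adds exactly the arc ending at `j`, if it starts at or after `i`; this
condition only weakens as `i` decreases. Symmetrically, moving the left end from `i + 1` to `i`
adds the arc starting at `i` if it ends at or before `j`, which persists as `j` grows.
-/

open Finset

namespace Matrix

variable {m n K : Type*} [Field K]

theorem linearIndependent_nonzero_rows {M : Matrix m n K}
    (hcol : ∀ a a' b, M a b ≠ 0 → M a' b ≠ 0 → a = a') :
    LinearIndependent K fun a : {a // M.row a ≠ 0} => M.row a := by
  rw [linearIndependent_iff']
  intro s g hg a ha
  obtain ⟨b, hb⟩ := Function.ne_iff.mp a.2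
  have hsum := congrFun hg b
  simp only [Finset.sum_apply, Pi.smul_apply, smul_eq_mul, Pi.zero_apply] at hsum
  rw [Finset.sum_eq_single a (fun a' _ ha' => ?_) (fun h => (h ha).elim)] at hsum
  · exact (mul_eq_zero.mp hsum).resolve_right hb
  · by_contra! h
    exact ha' (Subtype.ext (hcol _ _ b (right_ne_zero_of_mul h) hb))

theorem rank_eq_card_nonzero_rows [Fintype m] [Fintype n] [DecidableEq K] {M : Matrix m n K}
    (hcol : ∀ a a' b, M a b ≠ 0 → M a' b ≠ 0 → a = a') :
    M.rank = #{a | M.row a ≠ 0} := by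
  have hspan : Submodule.span K (Set.range M.row) =
      Submodule.span K (Set.range fun a : {a // M.row a ≠ 0} => M.row a) := by
    refine le_antisymm (Submodule.span_le.mpr ?_) (Submodule.span_mono ?_)
    · rintro _ ⟨a, rfl⟩
      by_cases ha : M.row a = 0
      · simp [ha]
      · exact Submodule.subset_span ⟨⟨a, ha⟩, rfl⟩
    · rintro _ ⟨a, rfl⟩
      exact ⟨a, rfl⟩
  rw [rank_eq_finrank_span_row, hspan, finrank_span_eq_card (linearIndependent_nonzero_rows hcol),
    Fintype.card_subtype]

end Matrix

theorem Finset.card_filter_eq_add_ite_of_forall_ne {α : Type*} [Fintype α] [DecidableEq α]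
    {p q : α → Prop} [DecidablePred p] [DecidablePred q] (a : α) (hpq : ∀ x ≠ a, p x ↔ q x)
    (hq : ¬q a) : #{x | p x} = #{x | q x} + if p a then 1 else 0 := by
  rw [card_filter, card_filter, ← add_sum_erase _ _ (mem_univ a), ← add_sum_erase _ _ (mem_univ a),
    if_neg hq, zero_add, add_comm,
    sum_congr rfl fun x hx => if_congr (hpq x (ne_of_mem_erase hx)) rfl rfl]

section

variable {n : ℕ}

theorem Nmat_ne_zero_iff (σ : Equiv.Perm (Fin n)) (a b : Fin n) :
    Nmat σ a b ≠ 0 ↔ a < b ∧ σ a = b := by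
  simp [Nmat]

theorem rank_submatrix_Nmat (σ : Equiv.Perm (Fin n)) {w : ℕ} {e : Fin w → Fin n}
    (he : Function.Injective e) :
    ((Nmat σ).submatrix e e).rank = #{a | ∃ b, e a < e b ∧ σ (e a) = e b} := by
  rw [Matrix.rank_eq_card_nonzero_rows]
  · congr 1
    ext a
    simp [Function.ne_iff, Nmat_ne_zero_iff]
  · intro a a' b ha ha'
    rw [Matrix.submatrix_apply, Nmat_ne_zero_iff] at ha ha'
    exact he (σ.injective (ha.2.trans ha'.2.symm))

/-- Arcs `c < σ c` inside the window `i, …, j`; the window is 1-based, as in `Rfun`, while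
`c : Fin n` is 0-based. -/
def arcCount (σ : Equiv.Perm (Fin n)) (i j : ℕ) : ℕ :=
  #{c : Fin n | i ≤ (c : ℕ) + 1 ∧ c < σ c ∧ (σ c : ℕ) < j}

theorem Rfun_eq_arcCount (σ : Equiv.Perm (Fin n)) {i j : ℕ} (hi : 1 ≤ i) (hij : i ≤ j)
    (hj : j ≤ n) : Rfun σ i j = arcCount σ i j := by
  rcases hij.eq_or_lt with rfl | hlt
  · rw [Rfun, dif_neg (by omega), eq_comm, arcCount, card_eq_zero, filter_eq_empty_iff]
    intro c _ ⟨h1, h2, h3⟩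
    rw [Fin.lt_def] at h2
    omega
  · let e : Fin (j + 1 - i) → Fin n := fun a => ⟨i - 1 + a, by omega⟩
    have he : Function.Injective e := fun a b h => Fin.ext (by simpa [e] using h)
    rw [Rfun, dif_pos ⟨hi, hlt, hj⟩]
    change ((Nmat σ).submatrix e e).rank = _
    rw [rank_submatrix_Nmat σ he, arcCount]
    refine card_bij (fun a _ => e a) ?_ (fun a _ b _ h => he h) ?_
    · simp only [mem_filter, mem_univ, true_and, forall_exists_index, and_imp]
      intro a b hab hσ
      simp only [Fin.lt_def, Fin.ext_iff, e] at hab hσ ⊢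
      omega
    · simp only [mem_filter, mem_univ, true_and, exists_prop, and_imp]
      intro c h1 h2 h3
      have hc : e ⟨c - (i - 1), by omega⟩ = c := Fin.ext (by simp only [e]; omega)
      refine ⟨_, ⟨⟨σ c - (i - 1), by omega⟩, ?_⟩, hc⟩
      simp only [hc, Fin.lt_def, Fin.ext_iff, e] at h2 ⊢
      omega

theorem arcCount_succ_right (σ : Equiv.Perm (Fin n)) (i : ℕ) (c : Fin n) :
    arcCount σ i (c + 1) =
      arcCount σ i c + if i ≤ (σ.symm c : ℕ) + 1 ∧ σ.symm c < c then 1 else 0 := by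
  rw [arcCount, arcCount, card_filter_eq_add_ite_of_forall_ne (σ.symm c)
    (q := fun x : Fin n => i ≤ (x : ℕ) + 1 ∧ x < σ x ∧ (σ x : ℕ) < c)]
  · simp
  · intro x hx
    have : (σ x : ℕ) ≠ c := fun h => hx (σ.eq_symm_apply.mpr (Fin.ext h))
    omega
  · simp

theorem arcCount_succ_left (σ : Equiv.Perm (Fin n)) (c : Fin n) (j : ℕ) :
    arcCount σ (c + 1) j =
      arcCount σ (c + 1 + 1) j + if c < σ c ∧ (σ c : ℕ) < j then 1 else 0 := by
  rw [arcCount, arcCount, card_filter_eq_add_ite_of_forall_ne c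
    (q := fun x : Fin n => c + 1 + 1 ≤ (x : ℕ) + 1 ∧ x < σ x ∧ (σ x : ℕ) < j)]
  · simp
  · intro x hx
    have : (x : ℕ) ≠ c := fun h => hx (Fin.ext h)
    omega
  · simp

end

theorem stmt15_general (n : ℕ) (σ : Equiv.Perm (Fin n))
    (i j : ℕ) (hi : 1 ≤ i) (hij : i < j) (hj : j ≤ n) :
    (Rfun σ i j = Rfun σ i (j - 1) + 1 →
      ∀ i', 1 ≤ i' → i' ≤ i → Rfun σ i' j = Rfun σ i' (j - 1) + 1) ∧
    (Rfun σ i j = Rfun σ (i + 1) j + 1 →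
      ∀ j', j ≤ j' → j' ≤ n → Rfun σ i j' = Rfun σ (i + 1) j' + 1) := by
  obtain ⟨c, rfl⟩ : ∃ c : Fin n, j = c + 1 := ⟨⟨j - 1, by omega⟩, by simp; omega⟩
  obtain ⟨d, rfl⟩ : ∃ d : Fin n, i = d + 1 := ⟨⟨i - 1, by omega⟩, by simp; omega⟩
  simp only [Nat.add_sub_cancel]
  constructor
  · intro hjump i' hi' hi'i
    rw [Rfun_eq_arcCount σ hi' (by omega) hj, Rfun_eq_arcCount σ hi' (by omega) (by omega),
      arcCount_succ_right]
    rw [Rfun_eq_arcCount σ hi (by omega) hj, Rfun_eq_arcCount σ hi (by omega) (by omega),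
      arcCount_succ_right] at hjump
    split_ifs at hjump ⊢ <;> omega
  · intro hjump j' hj' hj'n
    rw [Rfun_eq_arcCount σ hi (by omega) hj'n, Rfun_eq_arcCount σ (by omega) (by omega) hj'n,
      arcCount_succ_left]
    rw [Rfun_eq_arcCount σ hi (by omega) hj, Rfun_eq_arcCount σ (by omega) (by omega) hj,
      arcCount_succ_left] at hjump
    split_ifs at hjump ⊢ <;> omega

/-- propagation of jumps in the rank matrix (Remark 5 of the paper). -/
theorem stmt15 (n : ℕ) (hn : 1 ≤ n) (σ : Equiv.Perm (Fin n)) (hσ : IsInvol σ)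
    (i j : ℕ) (hi : 1 ≤ i) (hij : i < j) (hj : j ≤ n) :
    (Rfun σ i j = Rfun σ i (j - 1) + 1 →
      ∀ i', 1 ≤ i' → i' ≤ i → Rfun σ i' j = Rfun σ i' (j - 1) + 1) ∧
    (Rfun σ i j = Rfun σ (i + 1) j + 1 →
      ∀ j', j ≤ j' → j' ≤ n → Rfun σ i j' = Rfun σ (i + 1) j' + 1) :=
  stmt15_general n σ i j hi hij hj
end
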